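/- arXiv:1003.1568 — 7 statements merged into one kernel-verified Lean document; each statement's English description precedes it below -/
import Mathlib

section
/- Let A be a commutative ring, let B be a commutative ring containing A as a subring, and let f ∈ A be a nonzerodivisor in both A and B. If the A-modules B/A, A/fA and B/fB all have finite length, then the A-modules A/fA and B/fB have equal length. -/
/-!
Both lengths are read off the `A`-module `B / fA`, where `fA ⊆ B` is the `A`-submodule spanned
by `f`. The chain `fA ⊆ A ⊆ B` gives `ℓ(B/fA) = ℓ(A/fA) + ℓ(B/A)`, while the chain
`fA ⊆ fB ⊆ B` gives `ℓ(B/fA) = ℓ(fB/fA) + ℓ(B/fB)`, and `fB/fA ≅ B/A` because multiplication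
by `f` is injective on `B`. Since `ℓ(B/A)` is finite it cancels.
-/

/-- The length of an `R`-module `M`, defined as the Krull dimension of its lattice of
submodules (i.e. the supremum of the lengths of chains of submodules). -/
noncomputable def moduleLength (R M : Type*) [Ring R] [AddCommGroup M] [Module R M] :
    WithBot ℕ∞ :=
  Order.krullDim (Submodule R M)

open Submodule LinearMap in
/-- Additivity of length along `0 → N ⧸ φ⁻¹ K → M ⧸ K → M ⧸ (K ⊔ range φ) → 0`. -/
theorem Module.length_quotient_eq_length_quotient_comap_add {R M N : Type*} [Ring R]
    [AddCommGroup M] [Module R M] [AddCommGroup N] [Module R N]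
    (φ : N →ₗ[R] M) (K : Submodule R M) :
    Module.length R (M ⧸ K) =
      Module.length R (N ⧸ K.comap φ) + Module.length R (M ⧸ (K ⊔ range φ)) := by
  refine Module.length_eq_add_of_exact ((K.comap φ).mapQ K φ le_rfl) (factor le_sup_left) ?_
    (factor_surjective _) ?_
  · rw [← ker_eq_bot, ker_mapQ, mkQ_map_self]
  · rw [exact_iff]
    simp [factor, ker_mapQ, range_mapQ, Submodule.map_sup]

theorem LinearMap.range_mulLeft {A B : Type*} [CommSemiring A] [CommSemiring B] [Algebra A B]
    (b : B) : range (mulLeft A b) = (Ideal.span {b}).restrictScalars A := by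
  ext x
  simp [Ideal.mem_span_singleton', mul_comm]

namespace Submodule

variable {A B : Type*} [CommRing A] [CommRing B] [Algebra A B]

theorem comap_linearMap_span_algebraMap (hAB : Function.Injective (algebraMap A B)) (f : A) :
    (span A {algebraMap A B f}).comap (Algebra.linearMap A B) = Ideal.span {f} := by
  ext x
  simp only [mem_comap, mem_span_singleton, Algebra.linearMap_apply, Algebra.smul_def,
    ← map_mul, hAB.eq_iff, Algebra.algebraMap_self, RingHom.id_apply]

theorem comap_mulLeft_span_algebraMap {f : A} (hf : algebraMap A B f ∈ nonZeroDivisors B) :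
    (span A {algebraMap A B f}).comap (LinearMap.mulLeft A (algebraMap A B f)) =
      LinearMap.range (Algebra.linearMap A B) := by
  ext x
  simp only [mem_comap, mem_span_singleton, LinearMap.mulLeft_apply, Algebra.smul_def,
    mul_comm _ (algebraMap A B f), mul_cancel_left_mem_nonZeroDivisors hf, LinearMap.mem_range,
    Algebra.linearMap_apply]

end Submodule

theorem length_quotient_eq_of_finiteLength_general
    (A B : Type*) [CommRing A] [CommRing B] [Algebra A B]
    (hAB : Function.Injective (algebraMap A B))
    (f : A) (hfB : algebraMap A B f ∈ nonZeroDivisors B)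
    (hBA : IsFiniteLength A (B ⧸ LinearMap.range (Algebra.linearMap A B))) :
    moduleLength A (A ⧸ Ideal.span {f}) =
      moduleLength A (B ⧸ (Ideal.span {algebraMap A B f}).restrictScalars A) := by
  set fA := Submodule.span A {algebraMap A B f}
  have hfA_le_A : fA ≤ LinearMap.range (Algebra.linearMap A B) :=
    (Submodule.span_singleton_le_iff_mem _ _).mpr ⟨f, rfl⟩
  have hfA_le_fB : fA ≤ LinearMap.range (LinearMap.mulLeft A (algebraMap A B f)) :=
    (Submodule.span_singleton_le_iff_mem _ _).mpr ⟨1, mul_one _⟩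
  have hchain_A := Module.length_quotient_eq_length_quotient_comap_add (Algebra.linearMap A B) fA
  rw [Submodule.comap_linearMap_span_algebraMap hAB, sup_eq_right.mpr hfA_le_A] at hchain_A
  have hchain_fB := Module.length_quotient_eq_length_quotient_comap_add
    (LinearMap.mulLeft A (algebraMap A B f)) fA
  rw [Submodule.comap_mulLeft_span_algebraMap hfB, sup_eq_right.mpr hfA_le_fB,
    LinearMap.range_mulLeft] at hchain_fB
  simp only [moduleLength, ← Module.coe_length]
  exact congrArg _ (WithTop.add_left_cancel (Module.length_ne_top_iff.mpr hBA)
    ((add_comm _ _).trans (hchain_A.symm.trans hchain_fB)))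

/-- Let `A ⊆ B` be commutative rings and `f ∈ A` a nonzerodivisor in both `A` and `B`.
If the `A`-modules `B/A`, `A/fA` and `B/fB` have finite length, then `A/fA` and `B/fB`
have equal length as `A`-modules. -/
theorem length_quotient_eq_of_finiteLength
    (A B : Type*) [CommRing A] [CommRing B] [Algebra A B]
    (hAB : Function.Injective (algebraMap A B))
    (f : A) (hfA : f ∈ nonZeroDivisors A) (hfB : algebraMap A B f ∈ nonZeroDivisors B)
    (hBA : IsFiniteLength A (B ⧸ LinearMap.range (Algebra.linearMap A B)))
    (hAfA : IsFiniteLength A (A ⧸ Ideal.span {f}))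
    (hBfB : IsFiniteLength A
      (B ⧸ (Ideal.span {algebraMap A B f}).restrictScalars A)) :
    moduleLength A (A ⧸ Ideal.span {f}) =
      moduleLength A (B ⧸ (Ideal.span {algebraMap A B f}).restrictScalars A) :=
  length_quotient_eq_of_finiteLength_general A B hAB f hfB hBA
end

section
/- Let O be a ℂ-subalgebra of ℂ[[t]] such that ℂ[[t]]/O is finite-dimensional over ℂ, and let f ∈ O be nonzero. Then the ℂ-vector space O/fO is finite-dimensional and dim_ℂ O/fO = ord(f). -/
set_option maxHeartbeats 1000000
set_option synthInstance.maxHeartbeats 400000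

/-- The order of a formal power series: the smallest `i` such that the coefficient
of `t^i` is nonzero (junk value `0` for the zero series). -/
noncomputable def ord (f : PowerSeries ℂ) : ℕ :=
  sInf {i : ℕ | PowerSeries.coeff i f ≠ 0}

/-!
Multiplication by `f` is injective on `ℂ[[t]]` and maps `O` into itself. Computing the dimension
of `ℂ[[t]]/fO` along the chains `fO ⊆ O ⊆ ℂ[[t]]` and `fO ⊆ fℂ[[t]] ⊆ ℂ[[t]]`, where
`fℂ[[t]]/fO ≅ ℂ[[t]]/O`, and cancelling the finite number `dim ℂ[[t]]/O`, gives
`dim O/fO = dim ℂ[[t]]/fℂ[[t]]`. Since `f = t^(ord f) · unit`, the latter quotient is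
`ℂ[[t]]/(t^(ord f))`, on which the first `ord f` coefficients are coordinates.
-/

open Module Submodule LinearMap

universe u

namespace LinearMap

variable {K : Type*} {V V' : Type u} [DivisionRing K] [AddCommGroup V] [Module K V]
  [AddCommGroup V'] [Module K V']

theorem rank_quotient_map_of_injective {f : V →ₗ[K] V'} (hf : Function.Injective f)
    (p : Submodule K V) :
    Module.rank K (V' ⧸ p.map f) = Module.rank K (V' ⧸ range f) + Module.rank K (V ⧸ p) := by
  rw [rank_quot_submodule_map_eq,
    (Quotient.equiv p (p.map f.rangeRestrict) (LinearEquiv.ofInjective f hf) rfl).rank_eq]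

theorem rank_quotient_comap_subtype_map_eq_of_injective {L : V →ₗ[K] V}
    (hL : Function.Injective L) {A : Submodule K V} (hA : A.map L ≤ A)
    [FiniteDimensional K (V ⧸ A)] :
    Module.rank K (A ⧸ (A.map L).comap A.subtype) = Module.rank K (V ⧸ range L) := by
  have hcodim := rank_quotient_map_of_injective hL A
  have htower := rank_quotient_map_of_injective A.injective_subtype ((A.map L).comap A.subtype)
  rw [map_comap_subtype, inf_eq_right.mpr hA, range_subtype, hcodim,
    add_comm (Module.rank K (V ⧸ A))] at htower
  exact ((Cardinal.add_right_inj_of_lt_aleph0 (rank_lt_aleph0 K (V ⧸ A))).1 htower).symm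

end LinearMap

theorem Ideal.restrictScalars_span_singleton {K R : Type*} [CommSemiring K] [CommSemiring R]
    [Algebra K R] (f : R) :
    (Ideal.span {f}).restrictScalars K = range (mulLeft K f) := by
  ext x
  simp [Ideal.mem_span_singleton', mul_comm]

theorem Subalgebra.rank_quotient_span_singleton {K R : Type*} [Field K] [CommRing R]
    [Algebra K R] (S : Subalgebra K R) [FiniteDimensional K (R ⧸ Subalgebra.toSubmodule S)]
    {f : R} (hf : IsLeftRegular f) (hfS : f ∈ S) :
    Module.rank K (S ⧸ Ideal.span {(⟨f, hfS⟩ : S)}) = Module.rank K (R ⧸ Ideal.span {f}) := by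
  have hA : (toSubmodule S).map (mulLeft K f) ≤ toSubmodule S := by
    rintro _ ⟨a, ha, rfl⟩
    exact S.mul_mem hfS ha
  have hspan : (Ideal.span {(⟨f, hfS⟩ : S)}).restrictScalars K =
      ((toSubmodule S).map (mulLeft K f)).comap (toSubmodule S).subtype := by
    ext ⟨x, hx⟩
    simp only [restrictScalars_mem, Ideal.mem_span_singleton', Subtype.ext_iff,
      MulMemClass.coe_mul, mul_comm, Subtype.exists, exists_prop, Submodule.mem_comap,
      Submodule.mem_map, Subalgebra.mem_toSubmodule, LinearMap.mulLeft_apply]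
    rfl
  rw [← (Quotient.restrictScalarsEquiv K (Ideal.span {(⟨f, hfS⟩ : S)})).rank_eq,
    ← (Quotient.restrictScalarsEquiv K (Ideal.span {f})).rank_eq, hspan,
    Ideal.restrictScalars_span_singleton]
  exact rank_quotient_comap_subtype_map_eq_of_injective hf hA

namespace PowerSeries

theorem rank_quotient_span_X_pow {R : Type*} [CommRing R] [StrongRankCondition R] (n : ℕ) :
    Module.rank R (R⟦X⟧ ⧸ Ideal.span {(X : R⟦X⟧) ^ n}) = n := by
  let φ : R⟦X⟧ →ₗ[R] (Fin n → R) := LinearMap.pi fun i ↦ coeff (i : ℕ)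
  have hφ : Function.Surjective φ := by
    intro v
    refine ⟨mk fun i ↦ if h : i < n then v ⟨i, h⟩ else 0, ?_⟩
    funext i
    simp [φ, i.isLt]
  have hker : ker φ = (Ideal.span {(X : R⟦X⟧) ^ n}).restrictScalars R := by
    ext x
    simp [φ, Ideal.mem_span_singleton, X_pow_dvd_iff, funext_iff, Fin.forall_iff]
  rw [← (Quotient.restrictScalarsEquiv R _).rank_eq, ← hker,
    (φ.quotKerEquivOfSurjective hφ).rank_eq, rank_fin_fun]

theorem rank_quotient_span_singleton {k : Type*} [Field k] {f : k⟦X⟧} (hf : f ≠ 0) :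
    Module.rank k (k⟦X⟧ ⧸ Ideal.span {f}) = f.order.toNat := by
  have hspan := Ideal.span_singleton_mul_right_unit (isUnit_divided_by_X_pow_order hf)
    (X ^ f.order.toNat)
  rw [X_pow_order_mul_divXPowOrder] at hspan
  rw [hspan, rank_quotient_span_X_pow]

end PowerSeries

theorem ord_eq_order_toNat (f : PowerSeries ℂ) : ord f = f.order.toNat := by
  rcases eq_or_ne f 0 with rfl | hf
  · simp [ord]
  have hne : {i : ℕ | PowerSeries.coeff i f ≠ 0}.Nonempty :=
    PowerSeries.exists_coeff_ne_zero_iff_ne_zero.mpr hf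
  rw [PowerSeries.order_eq_nat.mpr
    ⟨Nat.sInf_mem hne, fun i hi ↦ not_not.mp (Nat.notMem_of_lt_sInf hi)⟩]
  rfl

/-- If `O ⊆ ℂ[[t]]` is a `ℂ`-subalgebra with `dim_ℂ ℂ[[t]]/O < ∞` and `f ∈ O` is nonzero,
then `O/fO` is finite dimensional of dimension `ord f`. -/
theorem finrank_quotient_span_eq_ord
    (O : Subalgebra ℂ (PowerSeries ℂ))
    (hO : FiniteDimensional ℂ ((PowerSeries ℂ) ⧸ Subalgebra.toSubmodule O))
    (f : PowerSeries ℂ) (hfO : f ∈ O) (hf : f ≠ 0) :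
    FiniteDimensional ℂ (O ⧸ Ideal.span {(⟨f, hfO⟩ : O)}) ∧
      Module.finrank ℂ (O ⧸ Ideal.span {(⟨f, hfO⟩ : O)}) = ord f := by
  have hrank : Module.rank ℂ (O ⧸ Ideal.span {(⟨f, hfO⟩ : O)}) = ord f := by
    rw [O.rank_quotient_span_singleton (IsLeftCancelMulZero.mul_left_cancel_of_ne_zero hf),
      PowerSeries.rank_quotient_span_singleton hf, ord_eq_order_toNat]
  exact ⟨Module.rank_lt_aleph0_iff.mp (hrank ▸ Cardinal.natCast_lt_aleph0),
    Module.finrank_eq_of_rank_eq hrank⟩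
end

section
/- Let Γ be a numerical semigroup, let Δ be a subset of ℕ with Γ ⊆ Δ, and let i ∈ ℕ be such that i + Δ ⊆ Γ. Then the set Γ ∖ (i + Δ) is finite and its cardinality equals i minus the cardinality of Δ ∖ Γ. -/
/-!
Write `X = i + Δ`. The chain `X ⊆ Γ ⊆ Δ` splits `Δ \ X` into `Γ \ X` and `Δ \ Γ`, so it suffices
to see that `Δ \ X` has exactly `i` elements. Since `Δ` is cofinite and `X ⊆ Δ`, this set is
`Xᶜ \ Δᶜ`, and `Xᶜ = [0, i) ∪ (i + Δᶜ)` has `i + #Δᶜ` elements.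
-/

namespace Set

theorem ncard_sdiff_add_ncard_sdiff {α : Type*} {s t u : Set α} (hst : s ⊆ t) (htu : t ⊆ u)
    (hu : (u \ s).Finite) : (t \ s).ncard + (u \ t).ncard = (u \ s).ncard := by
  rw [← ncard_sdiff_add_ncard_of_subset (sdiff_subset_sdiff_left htu) hu,
    sdiff_sdiff_sdiff_cancel_right hst, add_comm]

end Set

namespace Nat

theorem compl_image_const_add (i : ℕ) (s : Set ℕ) :
    ((i + ·) '' s)ᶜ = Set.Iio i ∪ (i + ·) '' sᶜ := by
  ext x
  rcases lt_or_ge x i with hx | hx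
  · simp only [Set.mem_compl_iff, Set.mem_union, Set.mem_Iio, hx, true_or, iff_true]
    rintro ⟨y, -, rfl⟩
    exact (Nat.le_add_right i y).not_gt hx
  · obtain ⟨k, rfl⟩ := Nat.exists_eq_add_of_le hx
    simp

theorem finite_compl_image_const_add {s : Set ℕ} (hs : sᶜ.Finite) (i : ℕ) :
    ((i + ·) '' s)ᶜ.Finite := by
  rw [compl_image_const_add]
  exact (Set.finite_Iio i).union (hs.image _)

theorem ncard_compl_image_const_add {s : Set ℕ} (hs : sᶜ.Finite) (i : ℕ) :
    ((i + ·) '' s)ᶜ.ncard = i + sᶜ.ncard := by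
  have hdisj : Disjoint (Set.Iio i) ((i + ·) '' sᶜ) := by
    rw [Set.disjoint_left]
    rintro x hx ⟨y, -, rfl⟩
    exact (Nat.le_add_right i y).not_gt hx
  rw [compl_image_const_add, Set.ncard_union_eq hdisj (Set.finite_Iio i) (hs.image _),
    Set.ncard_Iio_nat, Set.ncard_image_of_injective _ (add_right_injective i)]

theorem finite_sdiff_image_const_add {s : Set ℕ} (hs : sᶜ.Finite) (i : ℕ) :
    (s \ (i + ·) '' s).Finite := by
  rw [← compl_sdiff_compl]
  exact (finite_compl_image_const_add hs i).sdiff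

theorem ncard_sdiff_image_const_add {s : Set ℕ} (hs : sᶜ.Finite) {i : ℕ}
    (hi : (i + ·) '' s ⊆ s) : (s \ (i + ·) '' s).ncard = i := by
  rw [← compl_sdiff_compl, Set.ncard_sdiff (Set.compl_subset_compl.2 hi) hs,
    ncard_compl_image_const_add hs, Nat.add_sub_cancel]

end Nat

/-- Let `Γ` be a numerical semigroup, `Δ ⊆ ℕ` with `Γ ⊆ Δ`, and `i ∈ ℕ` with `i + Δ ⊆ Γ`.
Then `Γ \ (i + Δ)` is finite and its cardinality equals `i` minus the cardinality
of `Δ \ Γ` (stated additively: `#(Γ \ (i + Δ)) + #(Δ \ Γ) = i`). -/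
theorem ncard_diff_add_subset (Γ : AddSubmonoid ℕ) (hΓ : ((Γ : Set ℕ)ᶜ).Finite)
    (Δ : Set ℕ) (hΓΔ : (Γ : Set ℕ) ⊆ Δ) (i : ℕ) (hiΔ : (i + ·) '' Δ ⊆ (Γ : Set ℕ)) :
    ((Γ : Set ℕ) \ ((i + ·) '' Δ)).Finite ∧
      ((Γ : Set ℕ) \ ((i + ·) '' Δ)).ncard + (Δ \ (Γ : Set ℕ)).ncard = i := by
  have hΔ : Δᶜ.Finite := hΓ.subset (Set.compl_subset_compl.2 hΓΔ)
  have hfin := Nat.finite_sdiff_image_const_add hΔ i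
  refine ⟨hfin.subset (Set.sdiff_subset_sdiff_left hΓΔ), ?_⟩
  rw [Set.ncard_sdiff_add_ncard_sdiff hiΔ hΓΔ hfin,
    Nat.ncard_sdiff_image_const_add hΔ (hiΔ.trans hΓΔ)]
end

section
/- Let O be a ℂ-subalgebra of ℂ[[t]] such that ℂ[[t]]/O is finite-dimensional over ℂ, and set Γ = {ord(h) : h ∈ O, h ≠ 0}. Then for every g ∈ Γ there exists a unique element τ_g ∈ O whose coefficient of t^g equals 1 and whose coefficient of t^i equals 0 for every i < g and for every i > g with i ∈ Γ. -/
set_option maxHeartbeats 1000000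
set_option synthInstance.maxHeartbeats 400000

/-!
The multiplication action of `O` on the finite-dimensional space `ℂ⟦t⟧ ⧸ O` cannot be
faithful, since `O` is infinite-dimensional; a nonzero `x ∈ O` acting trivially satisfies
`x ℂ⟦t⟧ ⊆ O`, and as `x = t^n · unit`, all series of order `≥ n` lie in `O`.
Starting from an element of `O` of order `g` with leading coefficient `1`, one clears its
coefficients at the finitely many `i ∈ Γ` with `g < i < n` by subtracting multiples of
elements of order `i`, and truncating at `n` clears the rest. Uniqueness holds because a
nonzero difference of two such elements would lie in `O` and vanish at its own order,
which is in `Γ`.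
-/

open PowerSeries

section Conductor

variable {K A : Type*} [Field K] [Ring A] [Algebra K A]

theorem PowerSeries.not_finiteDimensional : ¬ FiniteDimensional K K⟦X⟧ := fun _ =>
  Polynomial.not_finite <| FiniteDimensional.of_injective
    (Polynomial.coeToPowerSeries.algHom K : Polynomial K →ₐ[K] K⟦X⟧).toLinearMap
    fun p q h => Polynomial.coe_injective K (by simpa using h)

def Subalgebra.mulLeftQuotient (O : Subalgebra K A) :
    O →ₗ[K] Module.End K (A ⧸ Subalgebra.toSubmodule O) :=
  Submodule.mapQLinear _ _ ∘ₗ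
    (LinearMap.mul K A ∘ₗ O.val.toLinearMap).codRestrict _
      fun x _ hy => O.mul_mem x.2 hy

theorem Subalgebra.mulLeftQuotient_apply_mk (O : Subalgebra K A) (x : O) (a : A) :
    O.mulLeftQuotient x (Submodule.Quotient.mk a) = Submodule.Quotient.mk (x * a) :=
  rfl

theorem Subalgebra.exists_ne_zero_forall_mul_mem (O : Subalgebra K A)
    (hO : FiniteDimensional K (A ⧸ Subalgebra.toSubmodule O)) (hA : ¬ FiniteDimensional K A) :
    ∃ x ∈ O, x ≠ 0 ∧ ∀ a, x * a ∈ O := by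
  by_contra! h
  have hinj : Function.Injective O.mulLeftQuotient := by
    refine (injective_iff_map_eq_zero _).mpr fun x hx => ?_
    by_contra hx0
    obtain ⟨a, ha⟩ := h x x.2 (by simpa using hx0)
    refine ha ((Submodule.Quotient.mk_eq_zero (Subalgebra.toSubmodule O)).mp ?_)
    rw [← O.mulLeftQuotient_apply_mk, hx, LinearMap.zero_apply]
  have : FiniteDimensional K O := .of_injective _ hinj
  exact hA (Module.Finite.of_submodule_quotient (Subalgebra.toSubmodule O))

theorem Subalgebra.exists_forall_X_pow_dvd_mem (O : Subalgebra K K⟦X⟧)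
    (hO : FiniteDimensional K (K⟦X⟧ ⧸ Subalgebra.toSubmodule O)) :
    ∃ N, ∀ f : K⟦X⟧, X ^ N ∣ f → f ∈ O := by
  obtain ⟨x, -, hx0, hx⟩ := O.exists_ne_zero_forall_mul_mem hO PowerSeries.not_finiteDimensional
  obtain ⟨u, hu⟩ : IsUnit (divXPowOrder x) := by
    rw [isUnit_iff_constantCoeff, isUnit_iff_ne_zero]
    exact constantCoeff_divXPowOrder_eq_zero_iff.not.mpr hx0
  set n := x.order.toNat
  have hxu : X ^ n * (u : K⟦X⟧) = x := hu ▸ X_pow_order_mul_divXPowOrder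
  refine ⟨n, fun f ⟨q, hq⟩ => ?_⟩
  have : f = x * (↑u⁻¹ * q) := by rw [← hxu, mul_assoc, Units.mul_inv_cancel_left, hq]
  exact this ▸ hx _

end Conductor

theorem PowerSeries.X_pow_dvd_sub_trunc {R : Type*} [Ring R] (n : ℕ) (f : R⟦X⟧) :
    X ^ n ∣ f - (trunc n f : R⟦X⟧) := by
  refine X_pow_dvd_iff.mpr fun i hi => ?_
  rw [map_sub, Polynomial.coeff_coe, coeff_trunc, if_pos hi, sub_self]

theorem coeff_ord_ne_zero {f : ℂ⟦X⟧} (hf : f ≠ 0) : coeff (ord f) f ≠ 0 := by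
  have : ∃ i, coeff i f ≠ 0 := by
    by_contra! h
    exact hf (ext fun i => by simpa using h i)
  exact Nat.sInf_mem this

theorem coeff_of_lt_ord {f : ℂ⟦X⟧} {i : ℕ} (hi : i < ord f) : coeff i f = 0 :=
  not_not.mp (Nat.notMem_of_lt_sInf hi)

def valueSemigroup (O : Subalgebra ℂ ℂ⟦X⟧) : Set ℕ :=
  {n | ∃ h ∈ O, h ≠ 0 ∧ n = ord h}

section ValueSemigroup

variable {O : Subalgebra ℂ ℂ⟦X⟧} {g : ℕ}

theorem eq_zero_of_coeff_valueSemigroup {f : ℂ⟦X⟧} (hf : f ∈ O)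
    (h : ∀ i ∈ valueSemigroup O, coeff i f = 0) : f = 0 := by
  by_contra hf0
  exact coeff_ord_ne_zero hf0 (h _ ⟨f, hf, hf0, rfl⟩)

theorem exists_mem_coeff_eq_one_of_mem_valueSemigroup (hg : g ∈ valueSemigroup O) :
    ∃ h ∈ O, coeff g h = 1 ∧ ∀ i < g, coeff i h = 0 := by
  obtain ⟨h, hO, h0, rfl⟩ := hg
  refine ⟨(coeff (ord h) h)⁻¹ • h, O.smul_mem hO _, ?_, fun i hi => ?_⟩
  · rw [map_smul, smul_eq_mul, inv_mul_cancel₀ (coeff_ord_ne_zero h0)]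
  · rw [map_smul, coeff_of_lt_ord hi, smul_zero]

theorem exists_mem_coeff_valueSemigroup_eq_zero_of_lt (hg : g ∈ valueSemigroup O) (B : ℕ) :
    ∃ τ ∈ O, coeff g τ = 1 ∧ (∀ i < g, coeff i τ = 0) ∧
      ∀ i ∈ valueSemigroup O, g < i → i < B → coeff i τ = 0 := by
  induction B with
  | zero =>
    obtain ⟨τ, hτO, hτg, hτlow⟩ := exists_mem_coeff_eq_one_of_mem_valueSemigroup hg
    exact ⟨τ, hτO, hτg, hτlow, fun i _ _ hi => absurd hi (Nat.not_lt_zero i)⟩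
  | succ B ih =>
    obtain ⟨τ, hτO, hτg, hτlow, hτΓ⟩ := ih
    by_cases hB : B ∈ valueSemigroup O ∧ g < B
    · obtain ⟨h, hO, hB1, hBlow⟩ := exists_mem_coeff_eq_one_of_mem_valueSemigroup hB.1
      have hcoeff : ∀ i < B, coeff i (τ - coeff B τ • h) = coeff i τ := fun i hi => by
        rw [map_sub, map_smul, hBlow i hi, smul_zero, sub_zero]
      refine ⟨τ - coeff B τ • h, O.sub_mem hτO (O.smul_mem hO _), ?_, fun i hi => ?_,
        fun i hiΓ hgi hiB => ?_⟩
      · rw [hcoeff g hB.2, hτg]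
      · rw [hcoeff i (hi.trans hB.2), hτlow i hi]
      · rcases Nat.lt_succ_iff_lt_or_eq.mp hiB with hiB | rfl
        · rw [hcoeff i hiB, hτΓ i hiΓ hgi hiB]
        · rw [map_sub, map_smul, hB1, smul_eq_mul, mul_one, sub_self]
    · refine ⟨τ, hτO, hτg, hτlow, fun i hiΓ hgi hiB => ?_⟩
      rcases Nat.lt_succ_iff_lt_or_eq.mp hiB with hiB | rfl
      · exact hτΓ i hiΓ hgi hiB
      · exact absurd ⟨hiΓ, hgi⟩ hB

theorem exists_mem_coeff_valueSemigroup_eq_zero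
    (hO : FiniteDimensional ℂ (ℂ⟦X⟧ ⧸ Subalgebra.toSubmodule O)) (hg : g ∈ valueSemigroup O) :
    ∃ τ ∈ O, coeff g τ = 1 ∧ (∀ i < g, coeff i τ = 0) ∧
      ∀ i ∈ valueSemigroup O, g < i → coeff i τ = 0 := by
  obtain ⟨N, hN⟩ := O.exists_forall_X_pow_dvd_mem hO
  set B := max N (g + 1)
  obtain ⟨τ, hτO, hτg, hτlow, hτΓ⟩ := exists_mem_coeff_valueSemigroup_eq_zero_of_lt hg B
  have hcoeff (i : ℕ) : coeff i (trunc B τ : ℂ⟦X⟧) = if i < B then coeff i τ else 0 := by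
    rw [Polynomial.coeff_coe, coeff_trunc]
  have hgB : g < B := lt_max_of_lt_right g.lt_succ_self
  refine ⟨trunc B τ, ?_, ?_, fun i hi => ?_, fun i hiΓ hgi => ?_⟩
  · have htail : τ - trunc B τ ∈ O :=
      hN _ ((pow_dvd_pow X (le_max_left N (g + 1))).trans (X_pow_dvd_sub_trunc B τ))
    simpa using O.sub_mem hτO htail
  · rw [hcoeff, if_pos hgB, hτg]
  · rw [hcoeff, if_pos (hi.trans hgB), hτlow i hi]
  · rw [hcoeff]
    split_ifs with hiB
    exacts [hτΓ i hiΓ hgi hiB, rfl]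

end ValueSemigroup

/-- Let `O ⊆ ℂ[[t]]` be a `ℂ`-subalgebra with `dim_ℂ ℂ[[t]]/O < ∞` and put
`Γ = {ord h : h ∈ O, h ≠ 0}`.  For every `g ∈ Γ` there is a unique `τ_g ∈ O` with
coefficient of `t^g` equal to `1` and coefficient of `t^i` equal to `0` for all `i < g`
and all `i > g` lying in `Γ`. -/
theorem existsUnique_tau
    (O : Subalgebra ℂ (PowerSeries ℂ))
    (hO : FiniteDimensional ℂ ((PowerSeries ℂ) ⧸ Subalgebra.toSubmodule O))
    (g : ℕ) (hg : g ∈ {n : ℕ | ∃ h ∈ O, h ≠ 0 ∧ n = ord h}) :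
    ∃! τ : PowerSeries ℂ, τ ∈ O ∧
      PowerSeries.coeff g τ = 1 ∧
      (∀ i, i < g → PowerSeries.coeff i τ = 0) ∧
      (∀ i, i > g → i ∈ {n : ℕ | ∃ h ∈ O, h ≠ 0 ∧ n = ord h} →
        PowerSeries.coeff i τ = 0) := by
  obtain ⟨τ, hτO, hτg, hτlow, hτΓ⟩ := exists_mem_coeff_valueSemigroup_eq_zero hO hg
  refine ⟨τ, ⟨hτO, hτg, hτlow, fun i hgi hiΓ => hτΓ i hiΓ hgi⟩, ?_⟩
  rintro σ ⟨hσO, hσg, hσlow, hσΓ⟩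
  refine sub_eq_zero.mp (eq_zero_of_coeff_valueSemigroup (O.sub_mem hσO hτO) fun i hiΓ => ?_)
  rw [map_sub, sub_eq_zero]
  rcases lt_trichotomy i g with hi | rfl | hi
  · rw [hσlow i hi, hτlow i hi]
  · rw [hσg, hτg]
  · rw [hσΓ i hi hiΓ, hτΓ i hiΓ hi]
end

section
/- Let O be a ℂ-subalgebra of ℂ[[t]] such that ℂ[[t]]/O is finite-dimensional over ℂ, set Γ = {ord(h) : h ∈ O, h ≠ 0}, fix a₀, …, a_k ∈ Γ, let j = (a₀ + Γ) ∪ ⋯ ∪ (a_k + Γ), and for each λ let Σ_λ = {γ ∈ Γ : γ > a_λ and γ ∉ j}. Then for every ideal J of O with {ord(h) : h ∈ J, h ≠ 0} = j, there exist unique scalars s_{λ,i} ∈ ℂ (for λ = 0, …, k and i ∈ Σ_λ) such that J is generated as an ideal of O by the elements f_λ = τ_{a_λ} + Σ_{i ∈ Σ_λ} s_{λ,i} τ_i. -/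
set_option maxHeartbeats 1000000
set_option synthInstance.maxHeartbeats 400000

/-!
A subalgebra `O ⊆ k⟦t⟧` of finite codimension contains `t^N k⟦t⟧` for some `N`: it contains a
nonconstant polynomial `q`, every `x` is multiplied into `O` by some nonzero `r(q) ∈ O`, and the
product of these multipliers over a basis of `k⟦t⟧/O` multiplies all of `k⟦t⟧` into `O`. Hence a
nonzero ideal of `O` contains every series of large enough order, and below that order Gaussian
elimination along orders (subtracting multiples of elements of prescribed order) is a finite
process.

Starting from an element of `J` of order `a_λ`, elimination produces `f_λ ∈ J` whose coefficients
vanish on `j` above `a_λ`; since an element of `O` is determined by its coefficients on `Γ`, this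
says `f_λ = τ_{a_λ} + Σ s_{λ,i} τ_i`. The products `f_λ y` with `y ∈ O` realise every order in
`j`, so elimination by them reduces any element of `J` to one with no coefficient on `j`, which is
`0`: the `f_λ` generate `J`. For uniqueness, the difference of two such generators lies in `J`,
so if nonzero its order lies in `j`, yet also in `Σ_λ`, which misses `j`.
-/

open PowerSeries

theorem ord_eq_toNat_order (f : ℂ⟦X⟧) : ord f = f.order.toNat := by
  rcases eq_or_ne f 0 with rfl | hf
  · simp [ord]
  · refine le_antisymm (Nat.sInf_le (coeff_order hf)) (not_lt.1 fun h => ?_)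
    exact Nat.sInf_mem (s := {i | coeff i f ≠ 0}) ⟨_, coeff_order hf⟩
      (coeff_of_lt_order_toNat _ h)

theorem exists_ne_zero_ord_eq_iff {α : Type*} {P : α → Prop} {φ : α → ℂ⟦X⟧} {n : ℕ} :
    (∃ h, P h ∧ φ h ≠ 0 ∧ n = ord (φ h)) ↔ ∃ h, P h ∧ (φ h).order = n := by
  refine exists_congr fun h => and_congr_right fun _ => ?_
  rw [ord_eq_toNat_order]
  constructor
  · rintro ⟨h0, rfl⟩
    exact (coe_toNat_order h0).symm
  · intro ho
    exact ⟨fun h0 => by simp [h0] at ho, by simp [ho]⟩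

theorem finite_compl_image_add {Γ : Set ℕ} {N : ℕ} (hΓ : ∀ n, N ≤ n → n ∈ Γ) (a : ℕ) :
    ((a + ·) '' Γ)ᶜ.Finite :=
  (Set.finite_Iio (a + N)).subset fun n hn =>
    Set.mem_Iio.2 <| not_le.1 fun h => hn ⟨n - a, hΓ _ (by omega), show a + (n - a) = n by omega⟩

namespace PowerSeries

theorem eq_zero_of_order_mem_of_coeff_eq_zero {R : Type*} [Semiring R] {f : R⟦X⟧} {T : Set ℕ}
    (hT : ∀ n : ℕ, f.order = n → n ∈ T) (h : ∀ n ∈ T, coeff n f = 0) : f = 0 := by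
  by_contra hf
  exact coeff_order hf (h _ (hT _ (coe_toNat_order hf).symm))

theorem coeff_eq_ite_of_mem {R : Type*} [Semiring R] {Γ : Set ℕ} {f : R⟦X⟧} {g γ : ℕ}
    (hg : coeff g f = 1) (hlt : ∀ i, i < g → coeff i f = 0)
    (hgt : ∀ i, i > g → i ∈ Γ → coeff i f = 0) (hγ : γ ∈ Γ) :
    coeff γ f = if γ = g then 1 else 0 := by
  rcases lt_trichotomy γ g with h | rfl | h
  · rw [hlt γ h, if_neg h.ne]
  · rw [hg, if_pos rfl]
  · rw [hgt γ h hγ, if_neg h.ne']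

variable {k : Type*} [Field k]

theorem mul_X_pow_dvd_of_X_pow_dvd {f g : k⟦X⟧} (hf : f ≠ 0) {n : ℕ}
    (h : X ^ (f.order.toNat + n) ∣ g) : f * X ^ n ∣ g := by
  obtain ⟨u, hu⟩ := isUnit_divided_by_X_pow_order hf
  have : Associated (X ^ (f.order.toNat + n)) (f * X ^ n) := by
    refine ⟨u, ?_⟩
    conv_rhs => rw [← X_pow_order_mul_divXPowOrder (f := f), ← hu]
    ring
  exact this.dvd_iff_dvd_left.mp h

theorem exists_mem_forall_coeff_sub_eq_zero (W : Submodule k k⟦X⟧) {S : Set ℕ} {n₀ M : ℕ}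
    (hM : ∀ x, X ^ M ∣ x → x ∈ W) (hS : ∀ n ∈ S, n < M → ∃ e ∈ W, e.order = n)
    (hn₀ : ∀ n ∈ S, n₀ ≤ n) (h : k⟦X⟧) :
    ∃ w ∈ W, X ^ n₀ ∣ w ∧ ∀ n ∈ S, coeff n (h - w) = 0 := by
  classical
  have below : ∀ m ≤ M, ∃ w ∈ W, X ^ n₀ ∣ w ∧ ∀ n ∈ S, n < m → coeff n (h - w) = 0 := by
    intro m
    induction m with
    | zero =>
      exact fun _ => ⟨0, W.zero_mem, dvd_zero _, fun n _ hn => absurd hn n.not_lt_zero⟩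
    | succ m ih =>
      intro hm
      obtain ⟨w, hwW, hw₀, hw⟩ := ih (by omega)
      by_cases hmS : m ∈ S
      · obtain ⟨e, heW, he⟩ := hS m hmS (by omega)
        obtain ⟨hem, he_lt⟩ := order_eq_nat.1 he
        have he₀ : X ^ n₀ ∣ e :=
          X_pow_dvd_iff.2 fun i hi => he_lt i (hi.trans_le (hn₀ m hmS))
        refine ⟨w + (coeff m (h - w) / coeff m e) • e, add_mem hwW (W.smul_mem _ heW),
          dvd_add hw₀ (dvd_smul_of_dvd _ he₀), fun n hnS hn => ?_⟩
        rcases Nat.lt_succ_iff_lt_or_eq.1 hn with hn | rfl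
        · simp [← sub_sub, hw n hnS hn, he_lt n hn]
        · simp [← sub_sub, hem]
      · exact ⟨w, hwW, hw₀, fun n hnS hn =>
          hw n hnS (lt_of_le_of_ne (Nat.lt_succ_iff.1 hn) (by rintro rfl; exact hmS hnS))⟩
  obtain ⟨w, hwW, hw₀, hw⟩ := below M le_rfl
  set tail := mk fun n => if n ∈ S ∧ M ≤ n then coeff n (h - w) else 0
  have htail : ∀ m, (∀ n ∈ S, M ≤ n → m ≤ n) → X ^ m ∣ tail := fun m hm =>
    X_pow_dvd_iff.2 fun i hi => by
      simp only [tail, coeff_mk]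
      exact if_neg fun ⟨hiS, hiM⟩ => (hm i hiS hiM).not_gt hi
  refine ⟨w + tail, add_mem hwW (hM _ (htail M fun _ _ h => h)),
    dvd_add hw₀ (htail n₀ fun n hn _ => hn₀ n hn), fun n hn => ?_⟩
  rw [← sub_sub, map_sub]
  by_cases hnM : M ≤ n
  · simp [tail, hn, hnM]
  · simp [tail, hnM, hw n hn (by omega)]

end PowerSeries

theorem Polynomial.exists_ne_zero_apply_eq_zero {k V : Type*} [Field k] [AddCommGroup V]
    [Module k V] [FiniteDimensional k V] (L : Polynomial k →ₗ[k] V) : ∃ p ≠ 0, L p = 0 := by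
  by_contra! h
  exact Polynomial.not_finite (Module.Finite.of_injective L
    ((injective_iff_map_eq_zero L).2 fun p => not_imp_not.mp (h p)))

namespace Subalgebra

variable {k : Type*} [Field k] (O : Subalgebra k k⟦X⟧)
  [FiniteDimensional k (k⟦X⟧ ⧸ Subalgebra.toSubmodule O)]

theorem exists_polynomial_natDegree_pos_mem :
    ∃ q : Polynomial k, 0 < q.natDegree ∧ (q : k⟦X⟧) ∈ O := by
  obtain ⟨p, hp, hpO⟩ := Polynomial.exists_ne_zero_apply_eq_zero
    ((Subalgebra.toSubmodule O).mkQ ∘ₗ (Polynomial.coeToPowerSeries.algHom k).toLinearMap ∘ₗ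
      LinearMap.mulLeft k Polynomial.X)
  refine ⟨Polynomial.X * p, by simp [hp], ?_⟩
  simpa [Submodule.Quotient.mk_eq_zero] using hpO

theorem exists_ne_zero_mul_mem (x : k⟦X⟧) : ∃ p ∈ O, p ≠ 0 ∧ p * x ∈ O := by
  obtain ⟨q, hq, hqO⟩ := O.exists_polynomial_natDegree_pos_mem
  obtain ⟨r, hr, hrx⟩ := Polynomial.exists_ne_zero_apply_eq_zero
    ((Subalgebra.toSubmodule O).mkQ ∘ₗ LinearMap.mulRight k x ∘ₗ
      (Polynomial.aeval (q : k⟦X⟧)).toLinearMap)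
  refine ⟨Polynomial.aeval (q : k⟦X⟧) r, ?_, ?_, ?_⟩
  · exact Algebra.adjoin_le (Set.singleton_subset_iff.2 hqO)
      (Polynomial.aeval_mem_adjoin_singleton k _)
  · have : Polynomial.aeval (q : k⟦X⟧) r = ((r.comp q : Polynomial k) : k⟦X⟧) := by
      simpa [Polynomial.comp_eq_aeval] using
        Polynomial.aeval_algHom_apply (Polynomial.coeToPowerSeries.algHom k) q r
    rw [this, Ne, Polynomial.coe_eq_zero_iff, Polynomial.comp_eq_zero_iff]
    rintro (h | ⟨-, h⟩)
    · exact hr h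
    · rw [h, Polynomial.natDegree_C] at hq; exact hq.false
  · simpa [Submodule.Quotient.mk_eq_zero] using hrx

theorem exists_forall_X_pow_dvd_mem_s9 : ∃ N, ∀ x : k⟦X⟧, X ^ N ∣ x → x ∈ O := by
  let b := Module.finBasis k (k⟦X⟧ ⧸ toSubmodule O)
  choose y hy using fun i => Submodule.Quotient.mk_surjective _ (b i)
  choose p hpO hp0 hpy using fun i => O.exists_ne_zero_mul_mem (y i)
  set P := ∏ i, p i
  have hP0 : P ≠ 0 := Finset.prod_ne_zero_iff.2 fun i _ => hp0 i
  have hPy : ∀ i, P * y i ∈ O := fun i => by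
    rw [show P = p i * ∏ j ∈ Finset.univ.erase i, p j from
      (Finset.mul_prod_erase _ _ (Finset.mem_univ i)).symm, mul_right_comm]
    exact mul_mem (hpy i) (prod_mem fun j _ => hpO j)
  have hPO : ∀ x, P * x ∈ O := fun x => by
    set c := b.repr (Submodule.Quotient.mk x)
    have hx : x - ∑ i, c i • y i ∈ O := by
      rw [← Subalgebra.mem_toSubmodule, ← Submodule.Quotient.eq, ← Submodule.mkQ_apply,
        ← Submodule.mkQ_apply, map_sum]
      simp only [map_smul, Submodule.mkQ_apply, hy, b.sum_repr, c]
    have hsplit : P * x = P * (x - ∑ i, c i • y i) + ∑ i, c i • (P * y i) := by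
      simp only [mul_sub, Finset.mul_sum, mul_smul_comm, sub_add_cancel]
    rw [hsplit]
    exact add_mem (mul_mem (prod_mem fun i _ => hpO i) hx)
      (sum_mem fun i _ => O.smul_mem (hPy i) _)
  refine ⟨P.order.toNat, fun x hx => ?_⟩
  obtain ⟨z, rfl⟩ := mul_X_pow_dvd_of_X_pow_dvd hP0 (n := 0) (by simpa using hx)
  simpa using hPO z

end Subalgebra

namespace Ideal

variable {k : Type*} [Field k] {O : Subalgebra k k⟦X⟧} {N : ℕ} {J : Ideal O}

theorem mem_map_of_X_pow_order_add_dvd (hN : ∀ x, X ^ N ∣ x → x ∈ O) {u : O} (hu : u ∈ J)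
    (hu0 : (u : k⟦X⟧) ≠ 0) {x : k⟦X⟧} (hx : X ^ ((u : k⟦X⟧).order.toNat + N) ∣ x) :
    x ∈ (J.restrictScalars k).map O.val.toLinearMap := by
  obtain ⟨z, rfl⟩ := mul_X_pow_dvd_of_X_pow_dvd hu0 hx
  exact ⟨u * ⟨X ^ N * z, hN _ (dvd_mul_right _ _)⟩, J.mul_mem_right _ hu, by simp [mul_assoc]⟩

theorem exists_mem_order_eq_coeff_eq_one (hN : ∀ x, X ^ N ∣ x → x ∈ O) {u : O} (hu : u ∈ J)
    {a : ℕ} (hua : (u : k⟦X⟧).order = a) {T : Set ℕ} (hT : ∀ n ∈ T, ∃ e ∈ J, (e : k⟦X⟧).order = n) :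
    ∃ f ∈ J, (f : k⟦X⟧).order = a ∧ coeff a (f : k⟦X⟧) = 1 ∧
      ∀ n ∈ T, a < n → coeff n (f : k⟦X⟧) = 0 := by
  obtain ⟨hua_ne, hu_lt⟩ := order_eq_nat.1 hua
  have hu0 : (u : k⟦X⟧) ≠ 0 := fun h => hua_ne (by simp [h])
  obtain ⟨_, ⟨w, hwJ, rfl⟩, hw_dvd, hw⟩ := exists_mem_forall_coeff_sub_eq_zero
    ((J.restrictScalars k).map O.val.toLinearMap) (S := {n ∈ T | a < n}) (n₀ := a + 1)
    (fun x hx => mem_map_of_X_pow_order_add_dvd hN hu hu0 (by rwa [hua, ENat.toNat_natCast]))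
    (fun n hn _ => by
      obtain ⟨e, heJ, he⟩ := hT n hn.1
      exact ⟨e, ⟨e, heJ, rfl⟩, he⟩)
    (fun n hn => hn.2) ((coeff a (u : k⟦X⟧))⁻¹ • (u : k⟦X⟧))
  simp only [AlgHom.toLinearMap_apply, Subalgebra.coe_val] at hw_dvd hw
  have hw_lt := X_pow_dvd_iff.1 hw_dvd
  set f : O := (coeff a (u : k⟦X⟧))⁻¹ • u - w
  have hfa : coeff a (f : k⟦X⟧) = 1 := by simp [f, hw_lt a (by omega), hua_ne]
  have hf_lt : ∀ i < a, coeff i (f : k⟦X⟧) = 0 := fun i hi => by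
    simp [f, hw_lt i (by omega), hu_lt i hi]
  exact ⟨f, J.sub_mem (Submodule.smul_of_tower_mem J _ hu) hwJ,
    order_eq_nat.2 ⟨hfa ▸ one_ne_zero, hf_lt⟩, hfa,
    fun n hnT hn => by simpa [f] using hw n ⟨hnT, hn⟩⟩

theorem eq_span_range_of_orders (hN : ∀ x, X ^ N ∣ x → x ∈ O) {ι : Type*} {F : ι → O}
    (hFJ : ∀ i, F i ∈ J) {i₀ : ι} (hF₀ : (F i₀ : k⟦X⟧) ≠ 0)
    (hJ : ∀ x ∈ J, ∀ n : ℕ, (x : k⟦X⟧).order = n →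
      ∃ i, ∃ y : O, ((F i * y : O) : k⟦X⟧).order = n) :
    J = Ideal.span (Set.range F) := by
  have hIJ : Ideal.span (Set.range F) ≤ J := Ideal.span_le.2 (Set.range_subset_iff.2 hFJ)
  refine le_antisymm (fun x hx => ?_) hIJ
  have hFI : ∀ i, F i ∈ Ideal.span (Set.range F) := fun i => Ideal.subset_span ⟨i, rfl⟩
  obtain ⟨_, ⟨w, hwI, rfl⟩, -, hw⟩ := exists_mem_forall_coeff_sub_eq_zero
    (((Ideal.span (Set.range F)).restrictScalars k).map O.val.toLinearMap)
    (S := {n | ∃ y ∈ J, (y : k⟦X⟧).order = n}) (n₀ := 0)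
    (fun y hy => mem_map_of_X_pow_order_add_dvd hN (hFI i₀) hF₀ hy)
    (fun n ⟨y, hyJ, hy⟩ _ => by
      obtain ⟨i, z, hz⟩ := hJ y hyJ n hy
      exact ⟨_, ⟨F i * z, Ideal.mul_mem_right _ _ (hFI i), rfl⟩, hz⟩)
    (fun _ _ => Nat.zero_le _) x
  simp only [AlgHom.toLinearMap_apply, Subalgebra.coe_val] at hw
  have hxw : x - w = 0 := Subtype.ext <| eq_zero_of_order_mem_of_coeff_eq_zero
    (T := {n | ∃ y ∈ J, (y : k⟦X⟧).order = n})
    (fun n hn => ⟨x - w, J.sub_mem hx (hIJ hwI), hn⟩) hw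
  rwa [sub_eq_zero.1 hxw]

end Ideal

namespace Subalgebra

variable {R : Type*} [CommRing R] {O : Subalgebra R R⟦X⟧} {Γ : Set ℕ} {τ : ℕ → O}
  {S : Set ℕ} [Finite S]

open Classical in
theorem coeff_finsum_smul
    (hτ : ∀ g ∈ Γ, ∀ γ ∈ Γ, coeff γ (τ g : R⟦X⟧) = if γ = g then 1 else 0)
    (hS : S ⊆ Γ) (t : S → R) {γ : ℕ} (hγ : γ ∈ Γ) :
    coeff γ ((∑ᶠ i : S, t i • τ i : O) : R⟦X⟧) = if h : γ ∈ S then t ⟨γ, h⟩ else 0 := by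
  have := Fintype.ofFinite S
  simp only [finsum_eq_sum_of_fintype, AddSubmonoidClass.coe_finsetSum, coe_smul, map_sum,
    map_smul, hτ _ (hS (Subtype.prop _)) γ hγ, smul_eq_mul, mul_ite, mul_one, mul_zero]
  split_ifs with h
  · rw [Finset.sum_eq_single ⟨γ, h⟩
      (fun i _ hi => if_neg fun hγi => hi (Subtype.ext hγi.symm))
      (fun h' => absurd (Finset.mem_univ _) h'), if_pos rfl]
  · exact Finset.sum_eq_zero fun i _ => if_neg fun (hγi : γ = i) => h (hγi ▸ i.2)

theorem eq_add_finsum_smul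
    (hτ : ∀ g ∈ Γ, ∀ γ ∈ Γ, coeff γ (τ g : R⟦X⟧) = if γ = g then 1 else 0)
    (hΓ : ∀ x : O, ∀ n : ℕ, (x : R⟦X⟧).order = n → n ∈ Γ) {a : ℕ} (ha : a ∈ Γ) (hS : S ⊆ Γ)
    (haS : ∀ i ∈ S, a < i) {f : O} (hf_order : (f : R⟦X⟧).order = a) (hfa : coeff a (f : R⟦X⟧) = 1)
    (hf : ∀ γ ∈ Γ, a < γ → γ ∉ S → coeff γ (f : R⟦X⟧) = 0) :
    f = τ a + ∑ᶠ i : S, coeff i (f : R⟦X⟧) • τ i := by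
  rw [← sub_eq_zero]
  refine Subtype.ext (eq_zero_of_order_mem_of_coeff_eq_zero (hΓ _) fun γ hγ => ?_)
  rw [AddSubgroupClass.coe_sub, AddMemClass.coe_add, map_sub, map_add, hτ a ha γ hγ,
    coeff_finsum_smul hτ hS _ hγ]
  rcases lt_trichotomy γ a with h | rfl | h
  · rw [dif_neg fun hγS => (haS γ hγS).not_gt h, if_neg h.ne,
      coeff_of_lt_order γ (by rw [hf_order]; exact_mod_cast h)]
    simp
  · rw [dif_neg fun hγS => (haS γ hγS).false, if_pos rfl, hfa]
    simp
  · by_cases hγS : γ ∈ S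
    · simp [hγS, h.ne']
    · simp [hγS, h.ne', hf γ hγ h hγS]

theorem eq_of_finsum_smul_sub_mem
    (hτ : ∀ g ∈ Γ, ∀ γ ∈ Γ, coeff γ (τ g : R⟦X⟧) = if γ = g then 1 else 0)
    (hΓ : ∀ x : O, ∀ n : ℕ, (x : R⟦X⟧).order = n → n ∈ Γ) (hS : S ⊆ Γ) {J : Ideal O}
    (hJ : ∀ x ∈ J, ∀ n ∈ S, (x : R⟦X⟧).order ≠ n) {t t' : S → R}
    (h : ∑ᶠ i : S, t i • τ i - ∑ᶠ i : S, t' i • τ i ∈ J) : t = t' := by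
  classical
  set d := ∑ᶠ i : S, t i • τ i - ∑ᶠ i : S, t' i • τ i
  have hd : ∀ γ ∈ Γ, coeff γ (d : R⟦X⟧) = if h : γ ∈ S then t ⟨γ, h⟩ - t' ⟨γ, h⟩ else 0 := by
    intro γ hγ
    rw [AddSubgroupClass.coe_sub, map_sub, coeff_finsum_smul hτ hS _ hγ,
      coeff_finsum_smul hτ hS _ hγ]
    split_ifs <;> simp
  have hd0 : (d : R⟦X⟧) = 0 := eq_zero_of_order_mem_of_coeff_eq_zero (T := Γ \ S)
    (fun n hn => ⟨hΓ d n hn, fun hnS => hJ d h n hnS hn⟩)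
    fun n hn => by rw [hd n hn.1, dif_neg hn.2]
  funext i
  have := hd i (hS i.2)
  rw [hd0, map_zero, dif_pos i.2] at this
  exact sub_eq_zero.1 this.symm

end Subalgebra

/-- Let `O ⊆ ℂ[[t]]` be a `ℂ`-subalgebra with `dim_ℂ ℂ[[t]]/O < ∞`,
`Γ = {ord h : h ∈ O, h ≠ 0}`, `a₀, …, a_k ∈ Γ`, `j = ⋃ (a_λ + Γ)`,
`Σ_λ = {γ ∈ Γ : γ > a_λ, γ ∉ j}`, and for `g ∈ Γ` let `τ g` be the normalized element
of `O` of order `g`.  Then every ideal `J` of `O` whose set of orders is `j` is generated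
by elements `f_λ = τ (a_λ) + Σ_{i ∈ Σ_λ} s_{λ,i} τ i` for unique scalars `s_{λ,i} ∈ ℂ`. -/
theorem existsUnique_scalars_generators
    (O : Subalgebra ℂ (PowerSeries ℂ))
    (hO : FiniteDimensional ℂ ((PowerSeries ℂ) ⧸ Subalgebra.toSubmodule O))
    (Γ : Set ℕ) (hΓ : Γ = {n : ℕ | ∃ h ∈ O, h ≠ 0 ∧ n = ord h})
    (k : ℕ) (a : Fin (k + 1) → ℕ) (ha : ∀ lam, a lam ∈ Γ)
    (j : Set ℕ) (hj : j = ⋃ lam, (a lam + ·) '' Γ)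
    (Sig : Fin (k + 1) → Set ℕ)
    (hSig : ∀ lam, Sig lam = {γ : ℕ | γ ∈ Γ ∧ a lam < γ ∧ γ ∉ j})
    (τ : ℕ → O)
    (hτ : ∀ g ∈ Γ,
      PowerSeries.coeff g (τ g : PowerSeries ℂ) = 1 ∧
      (∀ i, i < g → PowerSeries.coeff i (τ g : PowerSeries ℂ) = 0) ∧
      (∀ i, i > g → i ∈ Γ → PowerSeries.coeff i (τ g : PowerSeries ℂ) = 0))
    (J : Ideal O)
    (hJ : {n : ℕ | ∃ h ∈ J, (h : PowerSeries ℂ) ≠ 0 ∧ n = ord (h : PowerSeries ℂ)} = j) :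
    ∃! s : (lam : Fin (k + 1)) → (Sig lam) → ℂ,
      J = Ideal.span (Set.range fun lam =>
        τ (a lam) + ∑ᶠ i : (Sig lam), s lam i • τ (i : ℕ)) := by
  have := hO
  obtain ⟨N, hN⟩ := O.exists_forall_X_pow_dvd_mem_s9
  have hΓ' : ∀ n, n ∈ Γ ↔ ∃ h ∈ O, h.order = n := fun n => by
    rw [hΓ]; exact exists_ne_zero_ord_eq_iff
  have hj' : ∀ n, n ∈ j ↔ ∃ h ∈ J, (h : ℂ⟦X⟧).order = n := fun n => by
    rw [← hJ]; exact exists_ne_zero_ord_eq_iff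
  have hΓO : ∀ x : O, ∀ n : ℕ, (x : ℂ⟦X⟧).order = n → n ∈ Γ := fun x n hn =>
    (hΓ' n).2 ⟨x, x.2, hn⟩
  have hτ' : ∀ g ∈ Γ, ∀ γ ∈ Γ, coeff γ (τ g : ℂ⟦X⟧) = if γ = g then 1 else 0 :=
    fun g hg _ hγ => coeff_eq_ite_of_mem (hτ g hg).1 (hτ g hg).2.1 (hτ g hg).2.2 hγ
  have hΓN : ∀ n, N ≤ n → n ∈ Γ := fun n hn =>
    (hΓ' n).2 ⟨X ^ n, hN _ (pow_dvd_pow _ hn), order_X_pow n⟩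
  have hSig_fin : ∀ lam, Finite (Sig lam) := fun lam =>
    (finite_compl_image_add hΓN (a lam)).subset fun n hn hnj =>
      (hSig lam ▸ hn).2.2 (hj ▸ Set.mem_iUnion.2 ⟨lam, hnj⟩)
  choose u hu hua using fun lam => (hj' (a lam)).1 <|
    hj ▸ Set.mem_iUnion.2 ⟨lam, 0, (hΓ' 0).2 ⟨1, O.one_mem, order_one⟩, add_zero _⟩
  choose F hFJ hF_order hF1 hFj using fun lam =>
    Ideal.exists_mem_order_eq_coeff_eq_one hN (hu lam) (hua lam) (T := j) fun n => (hj' n).1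
  have hFeq : ∀ lam, F lam = τ (a lam) + ∑ᶠ i : Sig lam, coeff i (F lam : ℂ⟦X⟧) • τ i :=
    fun lam => Subalgebra.eq_add_finsum_smul hτ' hΓO (ha lam)
      (fun i hi => (hSig lam ▸ hi).1) (fun i hi => (hSig lam ▸ hi).2.1) (hF_order lam) (hF1 lam)
      fun γ hγ hγa hγS => hFj lam γ (by_contra fun hγj => hγS (hSig lam ▸ ⟨hγ, hγa, hγj⟩)) hγa
  have hJF : J = Ideal.span (Set.range F) :=
    Ideal.eq_span_range_of_orders hN hFJ (i₀ := 0) (fun h => by simpa [h] using hF_order 0)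
      fun x hx n hn => by
        obtain ⟨lam, γ, hγ, rfl⟩ := Set.mem_iUnion.1 (hj ▸ (hj' n).2 ⟨x, hx, hn⟩)
        obtain ⟨y, hy, hyγ⟩ := (hΓ' γ).1 hγ
        exact ⟨lam, ⟨y, hy⟩, by rw [Subalgebra.coe_mul, order_mul, hF_order, hyγ]; rfl⟩
  refine ⟨fun lam i => coeff i (F lam : ℂ⟦X⟧),
    hJF.trans (congrArg (fun G => Ideal.span (Set.range G)) (funext hFeq)),
    fun s hs => funext fun lam => ?_⟩
  refine Subalgebra.eq_of_finsum_smul_sub_mem hτ' hΓO (fun i hi => (hSig lam ▸ hi).1) (J := J)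
    (fun x hx n hn hxn => (hSig lam ▸ hn).2.2 ((hj' n).2 ⟨x, hx, hxn⟩)) ?_
  rw [← add_sub_add_left_eq_sub _ _ (τ (a lam))]
  exact J.sub_mem (hs ▸ Ideal.subset_span ⟨lam, rfl⟩) (hFeq lam ▸ hFJ lam)
end

section
/- Let O be the ℂ-subalgebra of ℂ[[t]] that is the image of the substitution homomorphism ℂ[[x,y]] → ℂ[[t]] determined by x ↦ t⁴ and y ↦ t⁶ + t⁷, and let Γ = {ord(f) : f ∈ O, f ≠ 0}. Then there is no ideal J of O such that {ord(h) : h ∈ J, h ≠ 0} = (4 + Γ) ∪ (6 + Γ). -/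
set_option maxHeartbeats 1000000

/-- The substitution homomorphism `ℂ[[x,y]] → ℂ[[t]]`, `x ↦ t⁴`, `y ↦ t⁶ + t⁷`,
described coefficientwise. -/
noncomputable def subst47 (P : MvPowerSeries (Fin 2) ℂ) : PowerSeries ℂ :=
  PowerSeries.mk fun n => ∑ᶠ d : Fin 2 →₀ ℕ,
    MvPowerSeries.coeff d P *
      PowerSeries.coeff n
        (((PowerSeries.X : PowerSeries ℂ) ^ 4) ^ (d 0) *
          ((PowerSeries.X : PowerSeries ℂ) ^ 6 + (PowerSeries.X : PowerSeries ℂ) ^ 7) ^ (d 1))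

/-- `O = ℂ[[t⁴, t⁶+t⁷]]`, the image of the substitution homomorphism. -/
noncomputable def Oimage : Set (PowerSeries ℂ) := Set.range subst47

/-!
Every element of `O = ℂ[[t⁴, t⁶+t⁷]]` has zero coefficients at `t⁵` and `t⁹` and equal
coefficients at `t⁶` and `t⁷`; hence `7, 9 ∉ Γ` and `13 ∉ (4 + Γ) ∪ (6 + Γ)`. But since `0 ∈ Γ`,
such a `J` would contain some `h` of order 4 and `g` of order 6, say with leading coefficients
`a` and `b`. Then `g = b t⁶ (1 + t) + O(t⁸)` and `h = a t⁴ + O(t⁶)`, so in `a³ g² - b² h³ ∈ J`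
the terms of degree 12 cancel while the coefficient of `t¹³` is `2 a³ b² ≠ 0`.
-/

open PowerSeries

/-- `Γ = valueSet Oimage`. -/
def valueSet (S : Set ℂ⟦X⟧) : Set ℕ := {n | ∃ f ∈ S, f ≠ 0 ∧ n = ord f}

lemma order_eq_ord {f : ℂ⟦X⟧} (hf : f ≠ 0) : f.order = ord f := by
  have hne : {i | coeff i f ≠ 0}.Nonempty := exists_coeff_ne_zero_iff_ne_zero.mpr hf
  exact order_eq_nat.2
    ⟨Nat.sInf_mem hne, fun i hi => by_contra fun h => Nat.notMem_of_lt_sInf hi h⟩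

lemma mem_valueSet_iff {S : Set ℂ⟦X⟧} {n : ℕ} : n ∈ valueSet S ↔ ∃ f ∈ S, f.order = n := by
  constructor
  · rintro ⟨f, hfS, hf, rfl⟩
    exact ⟨f, hfS, order_eq_ord hf⟩
  · rintro ⟨f, hfS, hfn⟩
    have hf : f ≠ 0 := by rintro rfl; simp at hfn
    exact ⟨f, hfS, hf, by exact_mod_cast hfn.symm.trans (order_eq_ord hf)⟩

lemma coeff_X_pow_four_pow_mul_pow (n i j : ℕ) :
    coeff n (((X : ℂ⟦X⟧) ^ 4) ^ i * (X ^ 6 + X ^ 7) ^ j) =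
      if 4 * i + 6 * j ≤ n then (j.choose (n - (4 * i + 6 * j)) : ℂ) else 0 := by
  have : ((X : ℂ⟦X⟧) ^ 4) ^ i * (X ^ 6 + X ^ 7) ^ j =
      X ^ (4 * i + 6 * j) * (((1 + Polynomial.X : Polynomial ℂ) ^ j : Polynomial ℂ) : ℂ⟦X⟧) := by
    rw [show (X : ℂ⟦X⟧) ^ 6 + X ^ 7 = X ^ 6 * (1 + X) by ring]
    push_cast
    rw [mul_pow, ← pow_mul, ← pow_mul, pow_add, mul_assoc]
  rw [this, coeff_X_pow_mul', Polynomial.coeff_coe, Polynomial.coeff_one_add_X_pow]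

lemma coeff_eq_zero_of_mem_Oimage {n : ℕ}
    (hn : ∀ i j : ℕ, coeff n (((X : ℂ⟦X⟧) ^ 4) ^ i * (X ^ 6 + X ^ 7) ^ j) = 0)
    {f : ℂ⟦X⟧} (hf : f ∈ Oimage) : coeff n f = 0 := by
  obtain ⟨P, rfl⟩ := hf
  rw [subst47, coeff_mk]
  exact finsum_eq_zero_of_forall_eq_zero fun d => by rw [hn, mul_zero]

lemma coeff_eq_coeff_of_mem_Oimage {n m : ℕ}
    (hnm : ∀ i j : ℕ, coeff n (((X : ℂ⟦X⟧) ^ 4) ^ i * (X ^ 6 + X ^ 7) ^ j) =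
      coeff m (((X : ℂ⟦X⟧) ^ 4) ^ i * (X ^ 6 + X ^ 7) ^ j))
    {f : ℂ⟦X⟧} (hf : f ∈ Oimage) : coeff n f = coeff m f := by
  obtain ⟨P, rfl⟩ := hf
  simp only [subst47, coeff_mk, hnm]

lemma C_mem_Oimage (z : ℂ) : C z ∈ Oimage := by
  refine ⟨MvPowerSeries.C z, ext fun n => ?_⟩
  rw [subst47, coeff_mk, finsum_eq_single _ 0 fun d hd => by
    rw [MvPowerSeries.coeff_C, if_neg hd, zero_mul]]
  simp [coeff_C]

lemma coeff_five_eq_zero_of_mem_Oimage {f : ℂ⟦X⟧} (hf : f ∈ Oimage) : coeff 5 f = 0 :=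
  coeff_eq_zero_of_mem_Oimage (fun i j => by
    rw [coeff_X_pow_four_pow_mul_pow]
    split_ifs
    · rw [Nat.choose_eq_zero_of_lt (by omega), Nat.cast_zero]
    · rfl) hf

lemma coeff_nine_eq_zero_of_mem_Oimage {f : ℂ⟦X⟧} (hf : f ∈ Oimage) : coeff 9 f = 0 :=
  coeff_eq_zero_of_mem_Oimage (fun i j => by
    rw [coeff_X_pow_four_pow_mul_pow]
    split_ifs with hle
    · have : j = 0 ∨ (i = 0 ∧ j = 1) := by omega
      rw [Nat.choose_eq_zero_of_lt (by omega), Nat.cast_zero]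
    · rfl) hf

lemma coeff_seven_eq_coeff_six_of_mem_Oimage {f : ℂ⟦X⟧} (hf : f ∈ Oimage) :
    coeff 7 f = coeff 6 f :=
  coeff_eq_coeff_of_mem_Oimage (fun i j => by
    rw [coeff_X_pow_four_pow_mul_pow, coeff_X_pow_four_pow_mul_pow]
    split_ifs with h7 h6 h6
    · obtain ⟨rfl, rfl⟩ | ⟨rfl, rfl⟩ | ⟨rfl, rfl⟩ :
          (i = 0 ∧ j = 0) ∨ (i = 1 ∧ j = 0) ∨ (i = 0 ∧ j = 1) := by omega
      all_goals rfl
    · omega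
    · omega
    · rfl) hf

lemma zero_mem_valueSet_Oimage : 0 ∈ valueSet Oimage :=
  mem_valueSet_iff.2 ⟨1, by simpa using C_mem_Oimage 1, order_one⟩

lemma nine_notMem_valueSet_Oimage : 9 ∉ valueSet Oimage := by
  rintro h
  obtain ⟨f, hf, hf9⟩ := mem_valueSet_iff.1 h
  exact (order_eq_nat.1 hf9).1 (coeff_nine_eq_zero_of_mem_Oimage hf)

lemma seven_notMem_valueSet_Oimage : 7 ∉ valueSet Oimage := by
  rintro h
  obtain ⟨f, hf, hf7⟩ := mem_valueSet_iff.1 h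
  obtain ⟨h7, hlt⟩ := order_eq_nat.1 hf7
  exact h7 (by rw [coeff_seven_eq_coeff_six_of_mem_Oimage hf, hlt 6 (by norm_num)])

lemma thirteen_notMem_shifts_valueSet_Oimage :
    13 ∉ (4 + ·) '' valueSet Oimage ∪ (6 + ·) '' valueSet Oimage := by
  rintro (⟨m, hm, h13⟩ | ⟨m, hm, h13⟩) <;> dsimp only at h13
  · obtain rfl : m = 9 := by omega
    exact nine_notMem_valueSet_Oimage hm
  · obtain rfl : m = 7 := by omega
    exact seven_notMem_valueSet_Oimage hm

lemma order_C_mul_sq_sub_C_mul_cube {g h : ℂ⟦X⟧} (hg : g.order = 6)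
    (hg7 : coeff 7 g = coeff 6 g) (hh : h.order = 4) (hh5 : coeff 5 h = 0) :
    (C (coeff 4 h ^ 3) * g ^ 2 - C (coeff 6 g ^ 2) * h ^ 3).order = 13 := by
  obtain ⟨hb, hg_lt⟩ := order_eq_nat.1 hg
  obtain ⟨ha, hh_lt⟩ := order_eq_nat.1 hh
  obtain ⟨g, rfl⟩ := X_pow_dvd_iff.2 hg_lt
  obtain ⟨h, rfl⟩ := X_pow_dvd_iff.2 hh_lt
  simp only [coeff_X_pow_mul', le_refl, if_true, Nat.sub_self, Nat.reduceLeDiff, Nat.reduceSub,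
    coeff_zero_eq_constantCoeff] at ha hb hg7 hh5 ⊢
  set a := constantCoeff h
  set b := constantCoeff g
  have hfactor : C (a ^ 3) * (X ^ 6 * g) ^ 2 - C (b ^ 2) * (X ^ 4 * h) ^ 3 =
      X ^ 12 * (C (a ^ 3) * g ^ 2 - C (b ^ 2) * h ^ 3) := by ring
  have hcoeff0 : constantCoeff (C (a ^ 3) * g ^ 2 - C (b ^ 2) * h ^ 3) = 0 := by
    simp only [map_sub, map_mul, map_pow, constantCoeff_C]; ring
  have hcoeff1 : coeff 1 (C (a ^ 3) * g ^ 2 - C (b ^ 2) * h ^ 3) = 2 * a ^ 3 * b ^ 2 := by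
    rw [map_sub, coeff_C_mul, coeff_C_mul, coeff_one_pow, coeff_one_pow, hg7, hh5]; ring
  rw [hfactor, order_mul, order_X_pow, (order_eq_nat (n := 1)).2 ⟨?_, ?_⟩]
  · rfl
  · rw [hcoeff1]; simp [ha, hb]
  · intro i hi
    obtain rfl : i = 0 := by omega
    rwa [coeff_zero_eq_constantCoeff]

/-- With `O = ℂ[[t⁴, t⁶+t⁷]]` and `Γ = {ord f : f ∈ O, f ≠ 0}`, there is no ideal `J`
of `O` (a subset of `O` containing `0`, closed under addition and under multiplication
by elements of `O`) whose set of orders of nonzero elements is `(4 + Γ) ∪ (6 + Γ)`. -/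
theorem no_ideal_with_orders_four_six :
    ¬ ∃ J : Set (PowerSeries ℂ),
      J ⊆ Oimage ∧ (0 : PowerSeries ℂ) ∈ J ∧
      (∀ a ∈ J, ∀ b ∈ J, a + b ∈ J) ∧
      (∀ a ∈ Oimage, ∀ b ∈ J, a * b ∈ J) ∧
      {n : ℕ | ∃ h ∈ J, h ≠ 0 ∧ n = ord h} =
        ((4 + ·) '' {n : ℕ | ∃ f ∈ Oimage, f ≠ 0 ∧ n = ord f}) ∪
          ((6 + ·) '' {n : ℕ | ∃ f ∈ Oimage, f ≠ 0 ∧ n = ord f}) := by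
  rintro ⟨J, hJO, -, hadd, hmul, hJ⟩
  change valueSet J = (4 + ·) '' valueSet Oimage ∪ (6 + ·) '' valueSet Oimage at hJ
  obtain ⟨h, hJh, hh⟩ := mem_valueSet_iff.1
    (show 4 ∈ valueSet J from hJ ▸ Or.inl ⟨0, zero_mem_valueSet_Oimage, rfl⟩)
  obtain ⟨g, hJg, hg⟩ := mem_valueSet_iff.1
    (show 6 ∈ valueSet J from hJ ▸ Or.inr ⟨0, zero_mem_valueSet_Oimage, rfl⟩)
  have hpow : ∀ f ∈ J, ∀ n, f ^ (n + 1) ∈ J := fun f hf n => by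
    induction n with
    | zero => simpa using hf
    | succ n ih => simpa [pow_succ'] using hmul f (hJO hf) _ ih
  have hCmul : ∀ z : ℂ, ∀ f ∈ J, C z * f ∈ J := fun z f hf => hmul _ (C_mem_Oimage z) f hf
  have hJe : C (coeff 4 h ^ 3) * g ^ 2 + C (-coeff 6 g ^ 2) * h ^ 3 ∈ J :=
    hadd _ (hCmul _ _ (hpow g hJg 1)) _ (hCmul _ _ (hpow h hJh 2))
  have he := order_C_mul_sq_sub_C_mul_cube hg (coeff_seven_eq_coeff_six_of_mem_Oimage (hJO hJg))
    hh (coeff_five_eq_zero_of_mem_Oimage (hJO hJh))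
  rw [sub_eq_add_neg, ← neg_mul, ← map_neg] at he
  exact thirteen_notMem_shifts_valueSet_Oimage (hJ ▸ mem_valueSet_iff.2 ⟨_, hJe, he⟩)
end

section
/- Let k and n be coprime positive integers and let Γ = {ak + bn : a, b ∈ ℕ}. Let S be the set of functions φ : {0, …, k−1} → ℕ satisfying φ(k−1) ≤ φ(k−2) ≤ ⋯ ≤ φ(0) ≤ φ(k−1) + n. Then the map φ ↦ Δ_φ = {αk + βn : 0 ≤ β ≤ k−1, α ∈ ℕ, α ≥ φ(β)} is a bijection from S onto the set of semigroup ideals of Γ, and for every φ ∈ S the colength of Δ_φ equals φ(0) + φ(1) + ⋯ + φ(k−1). -/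
/-!
Every element of `Γ = ⟨k, n⟩` is `α k + β n` for a unique pair with `0 ≤ β < k` (uniqueness
is where coprimality enters), so `Γ` is the disjoint union of the progressions `β n + kℕ`.
An ideal meets each of them in a tail `α ≥ φ(β)`, and a set is stable under `Γ` as soon as it is
stable under `+k`, which holds for any union of tails, and under `+n`. Adding `n` sends `(α, β)` to
`(α, β + 1)`, or to `(α + n, 0)` when `β = k - 1`, so stability under `+n` is exactly
`φ(β + 1) ≤ φ(β)` and `φ(0) ≤ φ(k - 1) + n`. The gaps of `Δ_φ` are the `φ(β)` elements below the
tails.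
-/

open Finset

def numSemigroup (k n : ℕ) : Set ℕ := {m | ∃ a b : ℕ, m = a * k + b * n}

def IsSemigroupIdeal (Γ Δ : Set ℕ) : Prop :=
  Δ.Nonempty ∧ Δ ⊆ Γ ∧ ∀ δ ∈ Δ, ∀ γ ∈ Γ, δ + γ ∈ Δ

def staircaseIdeal (k n : ℕ) (φ : Fin k → ℕ) : Set ℕ :=
  {m | ∃ β : Fin k, ∃ α : ℕ, φ β ≤ α ∧ m = α * k + (β : ℕ) * n}

noncomputable def staircaseOf (k n : ℕ) (Δ : Set ℕ) (β : Fin k) : ℕ :=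
  sInf {α | α * k + (β : ℕ) * n ∈ Δ}

section

variable {k n : ℕ}

theorem add_mul_eq_div_mod (k n a b : ℕ) :
    a * k + b * n = (a + b / k * n) * k + b % k * n := by
  conv_lhs => rw [← Nat.div_add_mod b k]
  ring

theorem mem_numSemigroup_iff (hk : 0 < k) {m : ℕ} :
    m ∈ numSemigroup k n ↔ ∃ β : Fin k, ∃ α : ℕ, m = α * k + (β : ℕ) * n := by
  constructor
  · rintro ⟨a, b, rfl⟩
    exact ⟨⟨b % k, Nat.mod_lt b hk⟩, a + b / k * n, add_mul_eq_div_mod k n a b⟩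
  · rintro ⟨β, α, rfl⟩
    exact ⟨α, β, rfl⟩

theorem eq_of_mul_add_mul_eq (hkn : k.Coprime n) {α α' : ℕ} {β β' : Fin k}
    (h : α * k + (β : ℕ) * n = α' * k + (β' : ℕ) * n) : α = α' ∧ β = β' := by
  have hmod : (β : ℕ) * n ≡ β' * n [MOD k] := by
    simpa [Nat.ModEq, Nat.add_comm, Nat.add_mul_mod_self_right] using congrArg (· % k) h
  obtain rfl : β = β' :=
    Fin.ext (Nat.ModEq.eq_of_lt_of_lt (hmod.cancel_right_of_coprime hkn) β.isLt β'.isLt)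
  exact ⟨Nat.eq_of_mul_eq_mul_right β.pos (by omega), rfl⟩

theorem mem_staircaseIdeal_iff (hkn : k.Coprime n) {φ : Fin k → ℕ} {α : ℕ} {β : Fin k} :
    α * k + (β : ℕ) * n ∈ staircaseIdeal k n φ ↔ φ β ≤ α := by
  constructor
  · rintro ⟨β', α', hle, heq⟩
    obtain ⟨rfl, rfl⟩ := eq_of_mul_add_mul_eq hkn heq
    exact hle
  · exact fun h => ⟨β, α, h, rfl⟩

theorem staircaseIdeal_injective (hkn : k.Coprime n) :
    Function.Injective (staircaseIdeal k n) := by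
  intro φ ψ h
  funext β
  refine eq_of_forall_ge_iff fun α => ?_
  rw [← mem_staircaseIdeal_iff hkn, ← mem_staircaseIdeal_iff hkn, h]

theorem add_mul_mem_of_forall_add_mem {Δ : Set ℕ} {c : ℕ} (h : ∀ δ ∈ Δ, δ + c ∈ Δ)
    {δ : ℕ} (hδ : δ ∈ Δ) (a : ℕ) : δ + a * c ∈ Δ := by
  induction a with
  | zero => simpa
  | succ a ih => simpa [add_mul, ← add_assoc] using h _ ih

theorem isSemigroupIdeal_of_add_mem {Δ : Set ℕ} (hne : Δ.Nonempty)
    (hsub : Δ ⊆ numSemigroup k n) (hk : ∀ δ ∈ Δ, δ + k ∈ Δ) (hn : ∀ δ ∈ Δ, δ + n ∈ Δ) :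
    IsSemigroupIdeal (numSemigroup k n) Δ := by
  refine ⟨hne, hsub, ?_⟩
  rintro δ hδ _ ⟨a, b, rfl⟩
  rw [← add_assoc]
  exact add_mul_mem_of_forall_add_mem hn (add_mul_mem_of_forall_add_mem hk hδ a) b

theorem isSemigroupIdeal_staircaseIdeal (hk : 0 < k) {φ : Fin k → ℕ}
    (hsucc : ∀ i : Fin k, ∀ h : (i : ℕ) + 1 < k, φ ⟨(i : ℕ) + 1, h⟩ ≤ φ i)
    (hwrap : φ ⟨0, hk⟩ ≤ φ ⟨k - 1, Nat.sub_lt hk one_pos⟩ + n) :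
    IsSemigroupIdeal (numSemigroup k n) (staircaseIdeal k n φ) := by
  refine isSemigroupIdeal_of_add_mem ⟨_, ⟨0, hk⟩, _, le_rfl, rfl⟩ ?_ ?_ ?_
  · rintro _ ⟨β, α, -, rfl⟩
    exact ⟨α, β, rfl⟩
  · rintro _ ⟨β, α, hle, rfl⟩
    exact ⟨β, α + 1, hle.trans α.le_succ, by ring⟩
  · rintro _ ⟨β, α, hle, rfl⟩
    by_cases hβ : (β : ℕ) + 1 < k
    · exact ⟨⟨β + 1, hβ⟩, α, (hsucc β hβ).trans hle, by push_cast; ring⟩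
    · have hlast : (β : ℕ) + 1 = k := by omega
      have hβ : β = ⟨k - 1, Nat.sub_lt hk one_pos⟩ := Fin.ext (Nat.eq_sub_of_add_eq hlast)
      rw [hβ] at hle
      refine ⟨⟨0, hk⟩, α + n, by omega, ?_⟩
      calc α * k + β * n + n = α * k + (β + 1) * n := by ring
        _ = (α + n) * k + 0 * n := by rw [hlast]; ring

theorem staircaseOf_le {Δ : Set ℕ} {α : ℕ} {β : Fin k} (h : α * k + (β : ℕ) * n ∈ Δ) :
    staircaseOf k n Δ β ≤ α :=
  Nat.sInf_le h

namespace IsSemigroupIdeal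

variable {Δ : Set ℕ} (hΔ : IsSemigroupIdeal (numSemigroup k n) Δ)
include hΔ

theorem nonempty_fiber (β : Fin k) : {α | α * k + (β : ℕ) * n ∈ Δ}.Nonempty := by
  obtain ⟨⟨δ, hδ⟩, hsub, hadd⟩ := hΔ
  obtain ⟨a, b, rfl⟩ := hsub hδ
  refine ⟨a + b * n, show (a + b * n) * k + (β : ℕ) * n ∈ Δ from ?_⟩
  convert hadd _ hδ _ ⟨0, β + (k - 1) * b, rfl⟩ using 1
  obtain ⟨j, rfl⟩ := Nat.exists_eq_add_one_of_ne_zero β.pos.ne'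
  simp only [add_tsub_cancel_right]
  ring

theorem staircaseOf_mem (β : Fin k) : staircaseOf k n Δ β * k + (β : ℕ) * n ∈ Δ :=
  Nat.sInf_mem (hΔ.nonempty_fiber β)

theorem staircaseOf_succ_le (i : Fin k) (h : (i : ℕ) + 1 < k) :
    staircaseOf k n Δ ⟨(i : ℕ) + 1, h⟩ ≤ staircaseOf k n Δ i := by
  refine staircaseOf_le ?_
  convert hΔ.2.2 _ (hΔ.staircaseOf_mem i) n ⟨0, 1, by ring⟩ using 1
  ring

theorem staircaseOf_zero_le (hk : 0 < k) :
    staircaseOf k n Δ ⟨0, hk⟩ ≤ staircaseOf k n Δ ⟨k - 1, Nat.sub_lt hk one_pos⟩ + n := by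
  refine staircaseOf_le ?_
  convert hΔ.2.2 _ (hΔ.staircaseOf_mem ⟨k - 1, Nat.sub_lt hk one_pos⟩) n ⟨0, 1, by ring⟩ using 1
  calc _ = staircaseOf k n Δ ⟨k - 1, Nat.sub_lt hk one_pos⟩ * k + (k - 1 + 1) * n := by
        rw [Nat.sub_add_cancel hk]; ring
    _ = _ := by ring

theorem staircaseIdeal_staircaseOf (hk : 0 < k) : staircaseIdeal k n (staircaseOf k n Δ) = Δ := by
  ext m
  constructor
  · rintro ⟨β, α, hle, rfl⟩
    obtain ⟨d, rfl⟩ := Nat.exists_eq_add_of_le hle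
    convert hΔ.2.2 _ (hΔ.staircaseOf_mem β) _ ⟨d, 0, rfl⟩ using 1
    ring
  · intro hm
    obtain ⟨β, α, rfl⟩ := (mem_numSemigroup_iff hk).1 (hΔ.2.1 hm)
    exact ⟨β, α, staircaseOf_le hm, rfl⟩

end IsSemigroupIdeal

theorem ncard_numSemigroup_diff_staircaseIdeal (hk : 0 < k) (hkn : k.Coprime n)
    (φ : Fin k → ℕ) : (numSemigroup k n \ staircaseIdeal k n φ).ncard = ∑ β, φ β := by
  have hgaps : numSemigroup k n \ staircaseIdeal k n φ =
      ((univ.sigma fun β => range (φ β)).image fun p => p.2 * k + (p.1 : ℕ) * n : Finset ℕ) := by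
    ext m
    simp only [Set.mem_sdiff, mem_numSemigroup_iff hk, coe_image, Set.mem_image, mem_coe,
      mem_sigma, mem_univ, mem_range, true_and, Sigma.exists]
    constructor
    · rintro ⟨⟨β, α, rfl⟩, hnot⟩
      exact ⟨β, α, not_le.1 (mt (mem_staircaseIdeal_iff hkn).2 hnot), rfl⟩
    · rintro ⟨β, α, hlt, rfl⟩
      exact ⟨⟨β, α, rfl⟩, fun h => ((mem_staircaseIdeal_iff hkn).1 h).not_gt hlt⟩
  have hinj : Function.Injective fun p : (_ : Fin k) × ℕ => p.2 * k + (p.1 : ℕ) * n := by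
    rintro ⟨β, α⟩ ⟨β', α'⟩ h
    obtain ⟨rfl, rfl⟩ := eq_of_mul_add_mul_eq hkn h
    rfl
  rw [hgaps, Set.ncard_coe_finset, card_image_of_injective _ hinj, card_sigma]
  simp

end

theorem staircase_bijection_general (k n : ℕ) (hk : 0 < k)
    (hkn : Nat.Coprime k n)
    (Γ : Set ℕ) (hΓ : Γ = {m : ℕ | ∃ a b : ℕ, m = a * k + b * n})
    (S : Set (Fin k → ℕ))
    (hS : S = {φ : Fin k → ℕ |
      (∀ i : Fin k, ∀ h : (i : ℕ) + 1 < k, φ ⟨(i : ℕ) + 1, h⟩ ≤ φ i) ∧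
      φ ⟨0, hk⟩ ≤ φ ⟨k - 1, Nat.sub_lt hk one_pos⟩ + n}) :
    Set.BijOn
      (fun φ : Fin k → ℕ =>
        {m : ℕ | ∃ β : Fin k, ∃ α : ℕ, φ β ≤ α ∧ m = α * k + (β : ℕ) * n})
      S
      {Δ : Set ℕ | Δ.Nonempty ∧ Δ ⊆ Γ ∧ ∀ δ ∈ Δ, ∀ γ ∈ Γ, δ + γ ∈ Δ} ∧
    ∀ φ ∈ S,
      (Γ \ {m : ℕ | ∃ β : Fin k, ∃ α : ℕ, φ β ≤ α ∧ m = α * k + (β : ℕ) * n}).ncard =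
        ∑ β : Fin k, φ β := by
  subst hΓ hS
  refine ⟨⟨fun φ hφ => isSemigroupIdeal_staircaseIdeal hk hφ.1 hφ.2,
    (staircaseIdeal_injective hkn).injOn, fun Δ hΔ => ?_⟩,
    fun φ _ => ncard_numSemigroup_diff_staircaseIdeal hk hkn φ⟩
  have hΔ : IsSemigroupIdeal (numSemigroup k n) Δ := hΔ
  exact ⟨staircaseOf k n Δ, ⟨hΔ.staircaseOf_succ_le, hΔ.staircaseOf_zero_le hk⟩,
    hΔ.staircaseIdeal_staircaseOf hk⟩

/-- For coprime positive `k, n` and `Γ = ⟨k,n⟩`, the staircase map `φ ↦ Δ_φ` is a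
bijection from the set `S` of functions `φ : {0,…,k−1} → ℕ` with
`φ(k−1) ≤ ⋯ ≤ φ(0) ≤ φ(k−1) + n` onto the set of semigroup ideals of `Γ`, and the
colength of `Δ_φ` is `Σ_β φ(β)`. -/
theorem staircase_bijection (k n : ℕ) (hk : 0 < k) (hn : 0 < n)
    (hkn : Nat.Coprime k n)
    (Γ : Set ℕ) (hΓ : Γ = {m : ℕ | ∃ a b : ℕ, m = a * k + b * n})
    (S : Set (Fin k → ℕ))
    (hS : S = {φ : Fin k → ℕ |
      (∀ i : Fin k, ∀ h : (i : ℕ) + 1 < k, φ ⟨(i : ℕ) + 1, h⟩ ≤ φ i) ∧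
      φ ⟨0, hk⟩ ≤ φ ⟨k - 1, Nat.sub_lt hk one_pos⟩ + n}) :
    Set.BijOn
      (fun φ : Fin k → ℕ =>
        {m : ℕ | ∃ β : Fin k, ∃ α : ℕ, φ β ≤ α ∧ m = α * k + (β : ℕ) * n})
      S
      {Δ : Set ℕ | Δ.Nonempty ∧ Δ ⊆ Γ ∧ ∀ δ ∈ Δ, ∀ γ ∈ Γ, δ + γ ∈ Δ} ∧
    ∀ φ ∈ S,
      (Γ \ {m : ℕ | ∃ β : Fin k, ∃ α : ℕ, φ β ≤ α ∧ m = α * k + (β : ℕ) * n}).ncard =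
        ∑ β : Fin k, φ β :=
  staircase_bijection_general k n hk hkn Γ hΓ S hS
end
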